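/- Let N(t) = sup{n ≥ 0 : S_n ≤ t} be a general counting process with interarrival times X_1, X_2, …, and let T be a nonnegative random variable independent of the process. Assume: (a) T is DFR; (b) P(T = 0)·P(X_1 = 0) = 0 (T and X_1 do not both have positive mass at 0); (c) the interarrival times X_1, X_2, … are mutually independent; (d) X_{n+1} ≤_ST X_n for all n = 1, 2, …. Then N(T) is d-DFR. -/

import Mathlib

open MeasureTheory ProbabilityTheory

variable {Ω : Type*} [MeasurableSpace Ω]

/-- Survival function of a random variable `T`: `F̄_T(t) = P(T > t)`. -/
noncomputable def surv (μ : Measure Ω) (T : Ω → ℝ) (t : ℝ) : ℝ :=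
  (μ {ω | t < T ω}).toReal

/-- `T` has the decreasing failure rate (DFR) property:
`F̄_T(s+z)·F̄_T(t) ≤ F̄_T(t+z)·F̄_T(s)` for all `0 ≤ s ≤ t` and `z ≥ 0`
(log-convexity of the survival function on `[0,∞)`). -/
def IsDFR (μ : Measure Ω) (T : Ω → ℝ) : Prop :=
  ∀ s t z : ℝ, 0 ≤ s → s ≤ t → 0 ≤ z →
    μ {ω | s + z < T ω} * μ {ω | t < T ω} ≤ μ {ω | t + z < T ω} * μ {ω | s < T ω}

/-- Arrival times: `S n = X 1 + ⋯ + X n` (with 0-based indexing of the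
interarrival times, `X i` is the `(i+1)`-st interarrival time), `S 0 = 0`. -/
noncomputable def arr (X : ℕ → Ω → ℝ) (n : ℕ) (ω : Ω) : ℝ :=
  ∑ i ∈ Finset.range n, X i ω

/-- The counting process `N(t) = sup {n ≥ 0 : S n ≤ t}` (valued in `ℕ∞`,
allowing infinitely many arrivals). -/
noncomputable def countN (X : ℕ → Ω → ℝ) (t : ℝ) (ω : Ω) : ℕ∞ :=
  sSup ((fun n : ℕ => (n : ℕ∞)) '' {n : ℕ | arr X n ω ≤ t})

/-- A (possibly defective) `ℕ∞`-valued random variable `M` is discrete DFR: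
`P(M ≥ n+1)² ≤ P(M ≥ n)·P(M ≥ n+2)` for all `n`. -/
def IsdDFR (μ : Measure Ω) (M : Ω → ℕ∞) : Prop :=
  ∀ n : ℕ,
    μ {ω | (n : ℕ∞) + 1 ≤ M ω} ^ 2 ≤
      μ {ω | (n : ℕ∞) ≤ M ω} * μ {ω | (n : ℕ∞) + 2 ≤ M ω}

/-- The random vector `(Z, W)` is associated: `Cov(f(Z,W), g(Z,W)) ≥ 0` for all
componentwise increasing `f g : ℝ² → ℝ` for which the covariance exists. -/
def Associated2 {Ω' : Type*} [MeasurableSpace Ω'] (μ : Measure Ω') (Z W : Ω' → ℝ) : Prop :=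
  ∀ f g : ℝ × ℝ → ℝ, Monotone f → Monotone g →
    Integrable (fun ω => f (Z ω, W ω)) μ → Integrable (fun ω => g (Z ω, W ω)) μ →
    Integrable (fun ω => f (Z ω, W ω) * g (Z ω, W ω)) μ →
    (∫ ω, f (Z ω, W ω) ∂μ) * (∫ ω, g (Z ω, W ω) ∂μ) ≤
      ∫ ω, f (Z ω, W ω) * g (Z ω, W ω) ∂μ

/-- Usual stochastic order: `X ≤_ST Y` iff `P(X > t) ≤ P(Y > t)` for all `t`. -/
def StochLE {Ω' : Type*} [MeasurableSpace Ω'] (μ : Measure Ω') (X Y : Ω' → ℝ) : Prop :=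
  ∀ t : ℝ, μ {ω | t < X ω} ≤ μ {ω | t < Y ω}

/-! With `g u = P(T ≥ u)`, independence gives `P(N(T) ≥ k) = P(S_k ≤ T) = E g(S_k)`, and
`S_{k+1}` has the law of `S_k` convolved with that of `X_{k+1}`. Letting `s ↓ y` in the DFR
inequality shows `g (y + a) g (y + a') ≤ g y g (y + a + a')` for `y, a, a' ≥ 0` (at `y = 0` one uses
`g 0 = 1` instead, since DFR is only assumed from `0` on and `T` may have an atom there). Averaging
`a, a'` over the law of `X_{n+1}` bounds `φ y ^ 2` by `g y · E φ (y + X_{n+1})`, where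
`φ y = E g (y + X_{n+1})`, and Cauchy–Schwarz over the law of `S_n` turns this into
`P(S_{n+1} ≤ T)² ≤ P(S_n ≤ T) · E φ(S_{n+1})`. Finally `X_{n+2} ≤_ST X_{n+1}` and `g` antitone give
`E φ(S_{n+1}) ≤ E g(S_{n+2}) = P(S_{n+2} ≤ T)`. -/

open Filter Set Topology
open scoped ENNReal

noncomputable def survGE (μ : Measure Ω) (T : Ω → ℝ) (u : ℝ) : ℝ≥0∞ := μ {ω | u ≤ T ω}

section survGE

variable {μ : Measure Ω} {T : Ω → ℝ}

lemma antitone_survGE : Antitone (survGE μ T) :=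
  fun _ _ huv => measure_mono fun _ h => huv.trans h

lemma measurable_survGE : Measurable (survGE μ T) :=
  antitone_survGE.measurable

lemma survGE_le_measure_lt {u v : ℝ} (hvu : v < u) : survGE μ T u ≤ μ {ω | v < T ω} :=
  measure_mono fun _ h => hvu.trans_le h

lemma survGE_eq_one [IsProbabilityMeasure μ] (hT : ∀ ω, 0 ≤ T ω) {u : ℝ} (hu : u ≤ 0) :
    survGE μ T u = 1 := by
  rw [survGE, show {ω | u ≤ T ω} = univ from eq_univ_of_forall fun ω => hu.trans (hT ω),
    measure_univ]

lemma tendsto_measure_sub_lt_survGE [IsFiniteMeasure μ] (hT : Measurable T) (u : ℝ) :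
    Tendsto (fun ε => μ {ω | u - ε < T ω}) (𝓝[>] 0) (𝓝 (survGE μ T u)) := by
  have hinter : ⋂ ε > (0 : ℝ), {ω | u - ε < T ω} = {ω | u ≤ T ω} := by
    ext ω
    simp only [mem_iInter, mem_ofPred_eq]
    refine ⟨fun h => le_of_forall_pos_lt_add fun ε hε => ?_, fun h ε hε => by linarith⟩
    linarith [h ε hε]
  rw [survGE, ← hinter]
  exact tendsto_measure_biInter_gt
    (fun ε _ => (measurableSet_lt measurable_const hT).nullMeasurableSet)
    (fun _ _ _ hij ω (h : u - _ < T ω) => show u - _ < T ω by linarith)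
    ⟨1, one_pos, measure_ne_top μ _⟩

end survGE

namespace IsDFR

variable {μ : Measure Ω} {T : Ω → ℝ}

lemma survGE_mul_le_of_pos [IsFiniteMeasure μ] (hDFR : IsDFR μ T) (hT : Measurable T) {y a a' : ℝ}
    (hy : 0 < y) (ha : 0 ≤ a) (ha' : 0 ≤ a') :
    survGE μ T (y + a) * survGE μ T (y + a') ≤ survGE μ T y * survGE μ T (y + a + a') := by
  rw [mul_comm (survGE μ T y)]
  refine ge_of_tendsto (ENNReal.Tendsto.mul (tendsto_measure_sub_lt_survGE hT _)
    (Or.inr (measure_ne_top μ _)) (tendsto_measure_sub_lt_survGE hT _)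
    (Or.inr (measure_ne_top μ _))) ?_
  filter_upwards [Ioo_mem_nhdsGT hy] with ε ⟨hε, hεy⟩
  calc survGE μ T (y + a) * survGE μ T (y + a')
      ≤ μ {ω | y - ε + a < T ω} * μ {ω | y + a' - ε < T ω} :=
        mul_le_mul' (survGE_le_measure_lt (by linarith)) (survGE_le_measure_lt (by linarith))
    _ ≤ μ {ω | y + a' - ε + a < T ω} * μ {ω | y - ε < T ω} :=
        hDFR _ _ _ (by linarith) (by linarith) ha
    _ = μ {ω | y + a + a' - ε < T ω} * μ {ω | y - ε < T ω} := by ring_nf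

lemma survGE_mul_le_add [IsProbabilityMeasure μ] (hDFR : IsDFR μ T) (hT : Measurable T)
    {a a' : ℝ} (ha : 0 ≤ a) (ha' : 0 ≤ a') :
    survGE μ T a * survGE μ T a' ≤ survGE μ T (a + a') := by
  rcases ha.eq_or_lt with rfl | ha
  · rw [zero_add]
    exact mul_le_of_le_one_left' prob_le_one
  rcases ha'.eq_or_lt with rfl | ha'
  · rw [add_zero]
    exact mul_le_of_le_one_right' prob_le_one
  refine ge_of_tendsto (tendsto_measure_sub_lt_survGE hT _) ?_
  filter_upwards [Ioo_mem_nhdsGT (lt_min ha ha')] with δ ⟨hδ, hδa⟩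
  have hδa' := hδa.trans_le (min_le_right a a')
  have hδa := hδa.trans_le (min_le_left a a')
  -- DFR at `s = δ/3`, `t = a' - δ/3`, `z = a - 2δ/3`, with `P(T > δ/3) ≤ 1`
  calc survGE μ T a * survGE μ T a'
      ≤ μ {ω | δ / 3 + (a - 2 * δ / 3) < T ω} * μ {ω | a' - δ / 3 < T ω} :=
        mul_le_mul' (survGE_le_measure_lt (by linarith)) (survGE_le_measure_lt (by linarith))
    _ ≤ μ {ω | a' - δ / 3 + (a - 2 * δ / 3) < T ω} * μ {ω | δ / 3 < T ω} :=
        hDFR _ _ _ (by linarith) (by linarith) (by linarith)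
    _ ≤ μ {ω | a + a' - δ < T ω} := by
        refine mul_le_of_le_one_right' prob_le_one |>.trans_eq ?_
        ring_nf

lemma survGE_mul_le [IsProbabilityMeasure μ] (hDFR : IsDFR μ T) (hT : Measurable T)
    (hT0 : ∀ ω, 0 ≤ T ω) {y a a' : ℝ} (hy : 0 ≤ y) (ha : 0 ≤ a) (ha' : 0 ≤ a') :
    survGE μ T (y + a) * survGE μ T (y + a') ≤ survGE μ T y * survGE μ T (y + a + a') := by
  rcases hy.eq_or_lt with rfl | hy
  · simpa [survGE_eq_one hT0 le_rfl] using hDFR.survGE_mul_le_add hT ha ha'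
  · exact hDFR.survGE_mul_le_of_pos hT hy ha ha'

end IsDFR

lemma sq_lintegral_le_mul_of_sq_le {α : Type*} [MeasurableSpace α] {ρ : Measure α}
    {f φ ψ : α → ℝ≥0∞} (hf : AEMeasurable f ρ) (hψ : AEMeasurable ψ ρ)
    (h : ∀ᵐ y ∂ρ, φ y ^ 2 ≤ f y * ψ y) :
    (∫⁻ y, φ y ∂ρ) ^ 2 ≤ (∫⁻ y, f y ∂ρ) * ∫⁻ y, ψ y ∂ρ := by
  have hsqrt : ∀ x : ℝ≥0∞, (x ^ (1 / 2 : ℝ)) ^ 2 = x := fun x => by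
    rw [← ENNReal.rpow_natCast, ← ENNReal.rpow_mul]; norm_num
  have hφ : ∫⁻ y, φ y ∂ρ ≤ ∫⁻ y, f y ^ (1 / 2 : ℝ) * ψ y ^ (1 / 2 : ℝ) ∂ρ := by
    refine lintegral_mono_ae (h.mono fun y hy => ?_)
    rw [← ENNReal.mul_rpow_of_nonneg _ _ (by norm_num : (0 : ℝ) ≤ 1 / 2)]
    calc φ y = (φ y ^ 2) ^ (1 / 2 : ℝ) := by
          rw [← ENNReal.rpow_natCast, ← ENNReal.rpow_mul]; norm_num
      _ ≤ (f y * ψ y) ^ (1 / 2 : ℝ) := ENNReal.rpow_le_rpow hy (by norm_num)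
  calc (∫⁻ y, φ y ∂ρ) ^ 2
      ≤ ((∫⁻ y, f y ∂ρ) ^ (1 / 2 : ℝ) * (∫⁻ y, ψ y ∂ρ) ^ (1 / 2 : ℝ)) ^ 2 := by
        gcongr
        exact hφ.trans (ENNReal.lintegral_mul_norm_pow_le hf hψ (by norm_num) (by norm_num)
          (by norm_num))
    _ = (∫⁻ y, f y ∂ρ) * ∫⁻ y, ψ y ∂ρ := by rw [mul_pow, hsqrt, hsqrt]

lemma sq_lintegral_add_le {f : ℝ → ℝ≥0∞} (hf : Measurable f) {y : ℝ}
    (hlog : ∀ a a', 0 ≤ a → 0 ≤ a' → f (y + a) * f (y + a') ≤ f y * f (y + a + a'))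
    {ν : Measure ℝ} [SFinite ν] (hν : ∀ᵐ a ∂ν, 0 ≤ a) :
    (∫⁻ a, f (y + a) ∂ν) ^ 2 ≤ f y * ∫⁻ a, ∫⁻ a', f (y + a + a') ∂ν ∂ν := by
  have hmeas : Measurable fun a => f (y + a) := hf.comp (measurable_const_add y)
  calc (∫⁻ a, f (y + a) ∂ν) ^ 2 = ∫⁻ a, ∫⁻ a', f (y + a) * f (y + a') ∂ν ∂ν := by
        rw [sq, lintegral_lintegral_mul hmeas.aemeasurable hmeas.aemeasurable]
    _ ≤ ∫⁻ a, ∫⁻ a', f y * f (y + a + a') ∂ν ∂ν :=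
        lintegral_mono_ae (hν.mono fun a ha =>
          lintegral_mono_ae (hν.mono fun a' ha' => hlog a a' ha ha'))
    _ = f y * ∫⁻ a, ∫⁻ a', f (y + a + a') ∂ν ∂ν := by
        rw [← lintegral_const_mul _ (by fun_prop)]
        refine lintegral_congr fun a => ?_
        exact lintegral_const_mul _ (hf.comp (measurable_const_add _))

lemma sq_lintegral_conv_le {g : ℝ → ℝ≥0∞} (hg : Measurable g)
    (hlog : ∀ y a a', 0 ≤ y → 0 ≤ a → 0 ≤ a' → g (y + a) * g (y + a') ≤ g y * g (y + a + a'))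
    {ρ α β : Measure ℝ} [SFinite α] [SFinite β] (hρ : ∀ᵐ y ∂ρ, 0 ≤ y) (hα : ∀ᵐ a ∂α, 0 ≤ a)
    (hαβ : ∀ z, ∫⁻ a, g (z + a) ∂α ≤ ∫⁻ b, g (z + b) ∂β) :
    (∫⁻ x, g x ∂(ρ ∗ α)) ^ 2 ≤ (∫⁻ x, g x ∂ρ) * ∫⁻ x, g x ∂((ρ ∗ α) ∗ β) := by
  have hshift : ∀ ν : Measure ℝ, [SFinite ν] → Measurable fun z => ∫⁻ b, g (z + b) ∂ν :=
    fun ν _ => Measurable.lintegral_prod_right' (hg.comp measurable_add)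
  rw [Measure.lintegral_conv hg, Measure.lintegral_conv hg, Measure.lintegral_conv (hshift β)]
  calc (∫⁻ y, ∫⁻ a, g (y + a) ∂α ∂ρ) ^ 2
      ≤ (∫⁻ y, g y ∂ρ) * ∫⁻ y, ∫⁻ a, ∫⁻ a', g (y + a + a') ∂α ∂α ∂ρ :=
        sq_lintegral_le_mul_of_sq_le hg.aemeasurable (by fun_prop)
          (hρ.mono fun y hy => sq_lintegral_add_le hg (hlog y · · hy) hα)
    _ ≤ (∫⁻ y, g y ∂ρ) * ∫⁻ y, ∫⁻ a, ∫⁻ b, g (y + a + b) ∂β ∂α ∂ρ :=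
        mul_le_mul_right (lintegral_mono fun y => lintegral_mono fun a => hαβ (y + a)) _

omit [MeasurableSpace Ω] in
lemma natCast_le_countN_iff {X : ℕ → Ω → ℝ} (hX : ∀ m ω, 0 ≤ X m ω) {t : ℝ} (ht : 0 ≤ t)
    (ω : Ω) (k : ℕ) : (k : ℕ∞) ≤ countN X t ω ↔ arr X k ω ≤ t := by
  have hmono : Monotone fun n => arr X n ω := fun m m' hm =>
    Finset.sum_le_sum_of_subset_of_nonneg (Finset.range_subset_range.mpr hm) fun i _ _ => hX i ω
  cases k with
  | zero => simpa [arr] using ht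
  | succ k =>
    rw [countN, Nat.cast_succ, ENat.add_one_le_iff (ENat.natCast_ne_top k), lt_sSup_iff]
    constructor
    · rintro ⟨_, ⟨m, hm, rfl⟩, hkm⟩
      exact (hmono (Nat.cast_lt.mp hkm)).trans hm
    · exact fun h => ⟨_, ⟨k + 1, h, rfl⟩, Nat.cast_lt.mpr k.lt_succ_self⟩

lemma measure_le_eq_lintegral_survGE {μ : Measure Ω} [IsFiniteMeasure μ] {S T : Ω → ℝ}
    (hS : Measurable S) (hT : Measurable T) (hind : IndepFun T S μ) :
    μ {ω | S ω ≤ T ω} = ∫⁻ s, survGE μ T s ∂(μ.map S) := by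
  have hle : MeasurableSet {p : ℝ × ℝ | p.1 ≤ p.2} := measurableSet_le measurable_fst measurable_snd
  calc μ {ω | S ω ≤ T ω} = μ.map (fun ω => (S ω, T ω)) {p | p.1 ≤ p.2} :=
        (Measure.map_apply (hS.prodMk hT) hle).symm
    _ = ∫⁻ s, μ.map T (Ici s) ∂(μ.map S) := by
        rw [(indepFun_iff_map_prod_eq_prod_map_map hS.aemeasurable hT.aemeasurable).mp hind.symm,
          Measure.prod_apply hle]
        rfl
    _ = ∫⁻ s, survGE μ T s ∂(μ.map S) := by
        simp_rw [Measure.map_apply hT measurableSet_Ici]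
        rfl

lemma lintegral_survGE_add_le_of_stochLE {μ : Measure Ω} [IsFiniteMeasure μ] {T A B : Ω → ℝ}
    (hT : Measurable T) (hA : Measurable A) (hB : Measurable B) (hBA : StochLE μ B A) (z : ℝ) :
    ∫⁻ a, survGE μ T (z + a) ∂(μ.map A) ≤ ∫⁻ b, survGE μ T (z + b) ∂(μ.map B) := by
  have hE : MeasurableSet {p : ℝ × Ω | z + p.1 ≤ T p.2} :=
    measurableSet_le (measurable_const.add measurable_fst) (hT.comp measurable_snd)
  have hfubini : ∀ (ν : Measure ℝ) [SFinite ν],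
      ∫⁻ x, survGE μ T (z + x) ∂ν = ∫⁻ ω, ν (Iic (T ω - z)) ∂μ := fun ν _ => by
    calc ∫⁻ x, survGE μ T (z + x) ∂ν = ν.prod μ {p : ℝ × Ω | z + p.1 ≤ T p.2} :=
          (Measure.prod_apply hE).symm
      _ = ∫⁻ ω, ν (Iic (T ω - z)) ∂μ := by
          rw [Measure.prod_apply_symm hE]
          refine lintegral_congr fun ω => congrArg ν ?_
          ext x
          simp [le_sub_iff_add_le']
  have hcdf : ∀ {Y : Ω → ℝ}, Measurable Y → ∀ c, μ.map Y (Iic c) = μ univ - μ {ω | c < Y ω} :=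
    fun hY c => by
      rw [Measure.map_apply hY measurableSet_Iic, ← measure_compl
        (measurableSet_lt measurable_const hY) (measure_ne_top μ _)]
      congr 1
      ext ω
      simp
  rw [hfubini, hfubini]
  exact lintegral_mono fun ω => by
    rw [hcdf hA, hcdf hB]
    exact tsub_le_tsub_left (hBA _) _

lemma measurable_arr {X : ℕ → Ω → ℝ} (hX : ∀ m, Measurable (X m)) (k : ℕ) :
    Measurable (arr X k) :=
  Finset.measurable_sum _ fun j _ => hX j

lemma ae_nonneg_map {μ : Measure Ω} {Y : Ω → ℝ} (hY : Measurable Y) (h : ∀ ω, 0 ≤ Y ω) :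
    ∀ᵐ y ∂(μ.map Y), 0 ≤ y :=
  (ae_map_iff hY.aemeasurable measurableSet_Ici).mpr (.of_forall h)

lemma map_arr_succ {μ : Measure Ω} [IsFiniteMeasure μ] {X : ℕ → Ω → ℝ}
    (hX : ∀ m, Measurable (X m)) (hc : iIndepFun X μ) (k : ℕ) :
    μ.map (arr X (k + 1)) = μ.map (arr X k) ∗ μ.map (X k) := by
  have harr : ∀ n, arr X n = ∑ j ∈ Finset.range n, X j := fun n => by
    ext ω; simp [arr]
  rw [harr, Finset.sum_range_succ, ← harr]
  exact (harr k ▸ hc.indepFun_sum_range_succ hX k).map_add_eq_map_conv_map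
    (measurable_arr hX k) (hX k)

theorem stmt5_general
    (μ : Measure Ω) [IsProbabilityMeasure μ]
    (X : ℕ → Ω → ℝ) (T : Ω → ℝ)
    (hXmeas : ∀ m, Measurable (X m)) (hXnonneg : ∀ m ω, 0 ≤ X m ω)
    (hTmeas : Measurable T) (hTnonneg : ∀ ω, 0 ≤ T ω)
    (hindep : IndepFun T (fun ω m => X m ω) μ)
    (ha : IsDFR μ T)
    (hc : iIndepFun X μ)
    (hd : ∀ n : ℕ, StochLE μ (X (n + 1)) (X n)) :
    IsdDFR μ (fun ω => countN X (T ω) ω) := by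
  have hlaw : ∀ k : ℕ, μ {ω | (k : ℕ∞) ≤ countN X (T ω) ω} =
      ∫⁻ s, survGE μ T s ∂(μ.map (arr X k)) := fun k => by
    simp_rw [natCast_le_countN_iff hXnonneg (hTnonneg _)]
    exact measure_le_eq_lintegral_survGE (measurable_arr hXmeas k) hTmeas
      (hindep.comp measurable_id (Finset.measurable_sum _ fun j _ => measurable_pi_apply j))
  intro n
  rw [show (n : ℕ∞) + 1 = (n + 1 : ℕ) by push_cast; rfl,
    show (n : ℕ∞) + 2 = (n + 1 + 1 : ℕ) by push_cast; ring, hlaw, hlaw, hlaw,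
    map_arr_succ hXmeas hc (n + 1), map_arr_succ hXmeas hc n]
  exact sq_lintegral_conv_le measurable_survGE
    (fun _ _ _ => ha.survGE_mul_le hTmeas hTnonneg)
    (ae_nonneg_map (measurable_arr hXmeas n) fun ω => Finset.sum_nonneg fun i _ => hXnonneg i ω)
    (ae_nonneg_map (hXmeas n) (hXnonneg n))
    (lintegral_survGE_add_le_of_stochLE hTmeas (hXmeas n) (hXmeas (n + 1)) (hd n))

/-- independent interarrival times. Let `N` be a general
counting process with interarrival times `X 0, X 1, …` (mathematically
`X_1, X_2, …`) and `T` a nonnegative random time independent of the process.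
Assume: (a) `T` is DFR; (b) `P(T = 0)·P(X_1 = 0) = 0`; (c) the interarrival
times are mutually independent; (d) `X_{n+1} ≤_ST X_n` for all `n ≥ 1`.
Then `N(T)` is d-DFR. -/
theorem stmt5
    (μ : Measure Ω) [IsProbabilityMeasure μ]
    (X : ℕ → Ω → ℝ) (T : Ω → ℝ)
    (hXmeas : ∀ m, Measurable (X m)) (hXnonneg : ∀ m ω, 0 ≤ X m ω)
    (hXnondeg : ∀ m, μ {ω | X m ω = 0} < 1)
    (hTmeas : Measurable T) (hTnonneg : ∀ ω, 0 ≤ T ω)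
    (hindep : IndepFun T (fun ω m => X m ω) μ)
    (ha : IsDFR μ T)
    (hb : μ {ω | T ω = 0} * μ {ω | X 0 ω = 0} = 0)
    (hc : iIndepFun X μ)
    (hd : ∀ n : ℕ, StochLE μ (X (n + 1)) (X n)) :
    IsdDFR μ (fun ω => countN X (T ω) ω) :=
  stmt5_general μ X T hXmeas hXnonneg hTmeas hTnonneg hindep ha hc hd
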